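/- For an integer k ≥ 1, let T_k ⊆ ℝ^3 be the simplex with vertices 0, e_1, e_1 + k e_2 and k e_3. Then #(T_k) = 2(k+1), #(T_k ∩ e_1^⊥) = k+1, and #(T_k ∩ e_2^⊥) = #(T_k ∩ e_3^⊥) = k+2. -/

import Mathlib

open scoped BigOperators

/-- The lattice point enumerator: the number of integer points in `A ⊆ ℝ^3`. -/
noncomputable def latCount (A : Set (Fin 3 → ℝ)) : ℕ :=
  (A ∩ {x : Fin 3 → ℝ | ∀ i, ∃ z : ℤ, x i = (z : ℝ)}).ncard

/-- The simplex `T_k = conv{0, e₁, e₁ + k e₂, k e₃} ⊆ ℝ³`. -/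
noncomputable def Tsimplex (k : ℕ) : Set (Fin 3 → ℝ) :=
  convexHull ℝ {(0 : Fin 3 → ℝ), ![1, 0, 0], ![1, (k : ℝ), 0], ![0, 0, (k : ℝ)]}

/-!
An integer point of `T_k` satisfies `0 ≤ x₁ ≤ k x₀`, `0 ≤ x₂` and `k x₀ + x₂ ≤ k`, which forces
`x₀ ∈ {0, 1}`: the lattice points of `T_k` are the `k + 1` points `(0, 0, j)` of the edge
`[0, k e₃]` and the `k + 1` points `(1, j, 0)` of the edge `[e₁, e₁ + k e₂]`. Each count is then
read off from which of these points lie in the coordinate plane.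
-/

open Finset

theorem convexHull_simplex_eq_inequalities {c : ℝ} (hc : 0 < c) :
    convexHull ℝ {(0 : Fin 3 → ℝ), ![1, 0, 0], ![1, c, 0], ![0, 0, c]} =
      {x | 0 ≤ x 1 ∧ x 1 ≤ c * x 0 ∧ 0 ≤ x 2 ∧ c * x 0 + x 2 ≤ c} := by
  apply subset_antisymm
  · refine convexHull_min ?_ ?_
    · rintro y (rfl | rfl | rfl | rfl) <;> simp [hc.le]
    · rintro u ⟨hu₁, hu₂, hu₃, hu₄⟩ v ⟨hv₁, hv₂, hv₃, hv₄⟩ a b ha hb hab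
      simp only [Set.mem_ofPred_eq, Pi.add_apply, Pi.smul_apply, smul_eq_mul]
      refine ⟨by positivity, by nlinarith, by positivity, by nlinarith⟩
  · rintro x ⟨hx₁, hx₂, hx₃, hx₄⟩
    -- the barycentric coordinates of `x`
    let w : Fin 4 → ℝ := ![1 - x 0 - x 2 / c, x 0 - x 1 / c, x 1 / c, x 2 / c]
    let z : Fin 4 → Fin 3 → ℝ := ![0, ![1, 0, 0], ![1, c, 0], ![0, 0, c]]
    have hw : ∀ i, 0 ≤ w i := by
      intro i
      fin_cases i <;>
        simp only [w, Fin.zero_eta, Fin.mk_one, Fin.reduceFinMk, Fin.isValue, Matrix.cons_val_zero,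
          Matrix.cons_val_one, Matrix.cons_val]
      all_goals first | positivity | (rw [sub_nonneg, div_le_iff₀ hc]; linarith)
    have hsum : ∑ i, w i = 1 := by
      simp only [w, Fin.sum_univ_four, Matrix.cons_val_zero, Matrix.cons_val_one, Matrix.cons_val]
      ring
    have hz : ∀ i, z i ∈ ({0, ![1, 0, 0], ![1, c, 0], ![0, 0, c]} : Set (Fin 3 → ℝ)) := by
      intro i; fin_cases i <;> simp [z]
    convert (convex_convexHull ℝ _).sum_mem (fun i _ => hw i) hsum
      (fun i _ => subset_convexHull ℝ _ (hz i)) using 1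
    ext i
    fin_cases i <;> simp [w, z, Fin.sum_univ_four, hc.ne']

def edgePoint : ℕ ⊕ ℕ → Fin 3 → ℝ :=
  Sum.elim (fun j => ![0, 0, j]) (fun j => ![1, j, 0])

theorem edgePoint_injective : Function.Injective edgePoint := by
  rintro (a | a) (b | b) h
  all_goals
    have h₀ := congrFun h 0
    have h₁ := congrFun h 1
    have h₂ := congrFun h 2
    simp_all [edgePoint]

theorem mem_Tsimplex_iff {k : ℕ} (hk : 0 < k) {x : Fin 3 → ℝ} :
    x ∈ Tsimplex k ↔ 0 ≤ x 1 ∧ x 1 ≤ k * x 0 ∧ 0 ≤ x 2 ∧ k * x 0 + x 2 ≤ k := by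
  rw [Tsimplex, convexHull_simplex_eq_inequalities (by exact_mod_cast hk), Set.mem_ofPred_eq]

theorem Tsimplex_inter_integerPoints {k : ℕ} (hk : 0 < k) :
    Tsimplex k ∩ {x | ∀ i, ∃ z : ℤ, x i = z} =
      edgePoint '' ((range (k + 1)).disjSum (range (k + 1)) : Set (ℕ ⊕ ℕ)) := by
  ext x
  simp only [Set.mem_inter_iff, mem_Tsimplex_iff hk, Set.mem_image, mem_coe]
  constructor
  · rintro ⟨⟨h₁, h₂, h₃, h₄⟩, hx⟩
    obtain ⟨z₀, hz₀⟩ := hx 0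
    obtain ⟨z₁, hz₁⟩ := hx 1
    obtain ⟨z₂, hz₂⟩ := hx 2
    simp only [hz₀, hz₁, hz₂] at h₁ h₂ h₃ h₄
    norm_cast at h₁ h₂ h₃ h₄
    lift z₁ to ℕ using h₁
    lift z₂ to ℕ using h₃
    obtain rfl | rfl : z₀ = 0 ∨ z₀ = 1 := by
      have : 0 ≤ z₀ := by nlinarith
      have : z₀ ≤ 1 := by nlinarith
      omega
    · refine ⟨.inl z₂, by simp only [inl_mem_disjSum, mem_range]; omega, ?_⟩
      funext i; fin_cases i <;> simp_all [edgePoint]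
    · refine ⟨.inr z₁, by simp only [inr_mem_disjSum, mem_range]; omega, ?_⟩
      funext i; fin_cases i <;> simp_all [edgePoint]
  · rintro ⟨s | s, hs, rfl⟩ <;>
      simp only [inl_mem_disjSum, inr_mem_disjSum, mem_range, Nat.lt_succ_iff] at hs <;>
      refine ⟨by simp [edgePoint, hs], fun i => ?_⟩ <;>
      fin_cases i
    exacts [⟨0, by simp [edgePoint]⟩, ⟨0, by simp [edgePoint]⟩, ⟨s, by simp [edgePoint]⟩,
      ⟨1, by simp [edgePoint]⟩, ⟨s, by simp [edgePoint]⟩, ⟨0, by simp [edgePoint]⟩]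

open Classical in
theorem latCount_Tsimplex_inter {k : ℕ} (hk : 0 < k) (H : Set (Fin 3 → ℝ)) :
    latCount (Tsimplex k ∩ H) =
      #{j ∈ range (k + 1) | ![0, 0, ((j : ℕ) : ℝ)] ∈ H}
        + #{j ∈ range (k + 1) | ![1, ((j : ℕ) : ℝ), 0] ∈ H} := by
  rw [latCount, Set.inter_right_comm, Tsimplex_inter_integerPoints hk, ← Set.image_inter_preimage,
    Set.ncard_image_of_injective _ edgePoint_injective, ← card_disjSum, ← Set.ncard_coe_finset]
  congr
  ext (j | j) <;> simp [edgePoint]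

/-- Lattice point counts for the simplex `T_k`: `#(T_k) = 2(k+1)`,
`#(T_k ∩ e₁^⊥) = k+1` and `#(T_k ∩ e₂^⊥) = #(T_k ∩ e₃^⊥) = k+2`. -/
theorem simplex_counts (k : ℕ) (hk : 1 ≤ k) :
    latCount (Tsimplex k) = 2 * (k + 1) ∧
    latCount (Tsimplex k ∩ {x : Fin 3 → ℝ | x 0 = 0}) = k + 1 ∧
    latCount (Tsimplex k ∩ {x : Fin 3 → ℝ | x 1 = 0}) = k + 2 ∧
    latCount (Tsimplex k ∩ {x : Fin 3 → ℝ | x 2 = 0}) = k + 2 := by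
  refine ⟨?_, ?_, ?_, ?_⟩
  · simpa [two_mul] using latCount_Tsimplex_inter hk Set.univ
  · simp [latCount_Tsimplex_inter hk]
  · simp [latCount_Tsimplex_inter hk]
  · simp [latCount_Tsimplex_inter hk, add_comm 1, add_assoc]
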